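/- For the $HLS_3$ inner double sum: $\sum_{q_1=0}^{u}\sum_{q_2=0}^{u-q_1}(-1)^{q_1}\binom{u}{q_1\ q_2}\binom{k_1+q_1}{j-q_2}_* R(q_1) = \binom{k_1+u}{j}_* \sum_{q_1=0}^{u}(-1)^{q_1}\binom{u}{q_1} R(q_1)$ for any function $R : \{0,\ldots,u\} \to \mathbb{R}$, integers $k_1 \geq 0$, $u \geq 0$ and any integer $j$. -/

import Mathlib

/-- Starred binomial coefficient: `a.choose b` if `0 ≤ b ≤ a`, else `0`. -/
def bstar (a : ℕ) (b : ℤ) : ℤ :=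
  if 0 ≤ b ∧ b ≤ (a : ℤ) then a.choose b.toNat else 0

open Finset

lemma bstar_of_neg {a : ℕ} {b : ℤ} (hb : b < 0) : bstar a b = 0 :=
  if_neg fun h => by omega

lemma bstar_natCast (a k : ℕ) : bstar a k = a.choose k := by
  unfold bstar
  split_ifs with h
  · rw [Int.toNat_natCast]
  · rw [Nat.choose_eq_zero_of_lt (by omega), Nat.cast_zero]

/-- Vandermonde's identity for the starred binomial coefficient. -/
theorem sum_range_choose_mul_bstar (m n : ℕ) (j : ℤ) :
    ∑ i ∈ range (m + 1), (m.choose i : ℤ) * bstar n (j - i) = bstar (m + n) j := by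
  obtain hj | ⟨J, rfl⟩ : j < 0 ∨ ∃ J : ℕ, j = J :=
    (lt_or_ge j 0).imp_right Int.eq_ofNat_of_zero_le
  · rw [bstar_of_neg hj]
    exact sum_eq_zero fun i _ => by rw [bstar_of_neg (by omega), mul_zero]
  set f : ℕ → ℤ := fun i => m.choose i * bstar n (J - i)
  have hlow : ∑ i ∈ range (m + 1), f i = ∑ i ∈ range (m + J + 1), f i :=
    sum_subset (range_subset_range.2 (by omega)) fun i hi hi' => by
      simp only [mem_range, not_lt] at hi hi'
      simp only [f, Nat.choose_eq_zero_of_lt (show m < i by omega), Nat.cast_zero, zero_mul]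
  have hhigh : ∑ i ∈ range (J + 1), f i = ∑ i ∈ range (m + J + 1), f i :=
    sum_subset (range_subset_range.2 (by omega)) fun i hi hi' => by
      simp only [mem_range, not_lt] at hi hi'
      simp only [f, bstar_of_neg (show (J : ℤ) - i < 0 by omega), mul_zero]
  have hvan : bstar (m + n) J = ∑ i ∈ range (J + 1), f i := by
    rw [bstar_natCast, Nat.add_choose_eq, Nat.sum_antidiagonal_eq_sum_range_succ_mk, Nat.cast_sum]
    refine sum_congr rfl fun i hi => ?_
    have hiJ : (J : ℤ) - i = ((J - i : ℕ) : ℤ) := by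
      rw [mem_range] at hi
      omega
    simp only [f, hiJ, bstar_natCast, Nat.cast_mul]
  exact hlow.trans (hvan.trans hhigh).symm

/-- The reduction step (semplificata): the inner double sum factors, via
`∑_{q₂=0}^{u-q₁} C(u-q₁,q₂) C*(k₁+q₁, j-q₂) = C*(k₁+u, j)`, as
`C*(k₁+u, j)` times the alternating sum of `R`. -/
theorem hls3_double_sum_reduction (u k1 : ℕ) (j : ℤ) (R : ℕ → ℝ) :
    ∑ q1 ∈ Finset.range (u + 1), ∑ q2 ∈ Finset.range (u - q1 + 1),
      (-1 : ℝ) ^ q1 * ((u.choose q1 * (u - q1).choose q2 : ℕ) : ℝ) *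
        (bstar (k1 + q1) (j - (q2 : ℤ)) : ℝ) * R q1
      = (bstar (k1 + u) j : ℝ) *
        ∑ q1 ∈ Finset.range (u + 1), (-1 : ℝ) ^ q1 * (u.choose q1 : ℝ) * R q1 := by
  rw [mul_sum]
  refine sum_congr rfl fun q1 hq1 => ?_
  have hsplit : u - q1 + (k1 + q1) = k1 + u := by
    rw [mem_range] at hq1
    omega
  have hinner : ∑ q2 ∈ range (u - q1 + 1),
      ((u - q1).choose q2 : ℝ) * (bstar (k1 + q1) (j - q2) : ℝ) = bstar (k1 + u) j := by
    rw [← hsplit]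
    exact_mod_cast sum_range_choose_mul_bstar (u - q1) (k1 + q1) j
  rw [← hinner, sum_mul]
  refine sum_congr rfl fun q2 _ => ?_
  push_cast
  ring
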